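/- arXiv:1902.03680 — 7 statements merged into one kernel-verified Lean document; each statement's English description precedes it below -/
import Mathlib

section
/- Let A, Â, P be L×L real matrices with nonnegative entries such that P is column-stochastic, A = ÂP, Â satisfies Â_ii > Â_ij for all j ≠ i, and trace(A) = trace(Â). Then P is the identity matrix. -/
/-!
Since `P` is column-stochastic, each diagonal entry `(Â P)ᵢᵢ = ∑ₖ Âᵢₖ Pₖᵢ` is a convex combination
of the `i`-th row of `Â`, hence at most `Âᵢᵢ`. Equality of the traces forces equality in every
row, and strict diagonal dominance then forces all the weight of column `i` of `P` onto `Pᵢᵢ`.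
-/

open Finset

namespace Matrix

lemma eq_one_of_sum_col_eq_one_of_apply_eq_zero {n R : Type*} [Fintype n] [DecidableEq n]
    [AddCommMonoidWithOne R] {P : Matrix n n R} (hcol : ∀ j, ∑ i, P i j = 1)
    (hoff : ∀ i k, k ≠ i → P k i = 0) : P = 1 := by
  ext k i
  obtain rfl | hki := eq_or_ne k i
  · rw [one_apply_eq, ← hcol k, sum_eq_single k (fun j _ hj ↦ hoff k j hj) (by simp)]
  · rw [one_apply_ne hki, hoff i k hki]

section Stochastic

variable {n R : Type*} [Fintype n] [DecidableEq n] [Ring R] [PartialOrder R]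
  [IsStrictOrderedRing R] {B P : Matrix n n R}

lemma mul_apply_self_le_of_mem_colStochastic (hP : P ∈ colStochastic R n)
    (hB : ∀ i j, B i j ≤ B i i) (i : n) : (B * P) i i ≤ B i i :=
  calc (B * P) i i = ∑ k, B i k * P k i := mul_apply
    _ ≤ ∑ k, B i i * P k i :=
      sum_le_sum fun k _ ↦ mul_le_mul_of_nonneg_right (hB i k) (nonneg_of_mem_colStochastic hP)
    _ = B i i := by rw [← mul_sum, sum_col_of_mem_colStochastic hP, mul_one]

lemma mul_apply_self_eq_of_trace_mul_eq (hP : P ∈ colStochastic R n)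
    (hB : ∀ i j, B i j ≤ B i i) (htr : trace (B * P) = trace B) (i : n) :
    (B * P) i i = B i i :=
  (sum_eq_sum_iff_of_le fun j _ ↦ mul_apply_self_le_of_mem_colStochastic hP hB j).1 htr i
    (mem_univ i)

lemma apply_eq_zero_of_mul_apply_self_eq (hP : P ∈ colStochastic R n)
    (hB : ∀ i j, j ≠ i → B i j < B i i) {i : n} (hi : (B * P) i i = B i i) {k : n}
    (hki : k ≠ i) : P k i = 0 := by
  have hle : ∀ j ∈ univ, B i j * P j i ≤ B i i * P j i := fun j _ ↦ by
    obtain rfl | hji := eq_or_ne j i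
    · rfl
    · exact mul_le_mul_of_nonneg_right (hB i j hji).le (nonneg_of_mem_colStochastic hP)
  have hsum : ∑ j, B i j * P j i = ∑ j, B i i * P j i := by
    rw [← mul_apply, hi, ← mul_sum, sum_col_of_mem_colStochastic hP, mul_one]
  have hterm := (sum_eq_sum_iff_of_le hle).1 hsum k (mem_univ k)
  by_contra hne
  have hpos : 0 < P k i := (nonneg_of_mem_colStochastic hP).lt_of_ne' hne
  exact (mul_lt_mul_of_pos_right (hB i k hki) hpos).ne hterm

theorem eq_one_of_mem_colStochastic_of_trace_mul_eq (hP : P ∈ colStochastic R n)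
    (hB : ∀ i j, j ≠ i → B i j < B i i) (htr : trace (B * P) = trace B) : P = 1 := by
  have hB' : ∀ i j, B i j ≤ B i i := fun i j ↦ by
    obtain rfl | hji := eq_or_ne j i
    · rfl
    · exact (hB i j hji).le
  refine eq_one_of_sum_col_eq_one_of_apply_eq_zero (sum_col_of_mem_colStochastic hP) ?_
  exact fun i k hki ↦ apply_eq_zero_of_mul_apply_self_eq hP hB
    (mul_apply_self_eq_of_trace_mul_eq hP hB' htr i) hki

end Stochastic

end Matrix

theorem stmt_2_general {L : ℕ} (A Ahat P : Matrix (Fin L) (Fin L) ℝ)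
    (hPnn : ∀ i j, 0 ≤ P i j) (hPs : ∀ i, ∑ j, P j i = 1)
    (hEq : A = Ahat * P)
    (hDD : ∀ i j, j ≠ i → Ahat i j < Ahat i i)
    (hTr : Matrix.trace A = Matrix.trace Ahat) :
    P = 1 :=
  Matrix.eq_one_of_mem_colStochastic_of_trace_mul_eq
    (Matrix.mem_colStochastic_iff_sum.2 ⟨hPnn, hPs⟩) hDD (hEq ▸ hTr)

theorem stmt_2 {L : ℕ} (A Ahat P : Matrix (Fin L) (Fin L) ℝ)
    (hA : ∀ i j, 0 ≤ A i j) (hAhat : ∀ i j, 0 ≤ Ahat i j)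
    (hPnn : ∀ i j, 0 ≤ P i j) (hPs : ∀ i, ∑ j, P j i = 1)
    (hEq : A = Ahat * P)
    (hDD : ∀ i j, j ≠ i → Ahat i j < Ahat i i)
    (hTr : Matrix.trace A = Matrix.trace Ahat) :
    P = 1 :=
  stmt_2_general A Ahat P hPnn hPs hEq hDD hTr
end

section
/- Let A, Â, P be L×L real matrices with nonnegative entries such that P is column-stochastic, A = ÂP, Â satisfies Â_ii > Â_ij for all j ≠ i, and trace(A) = trace(Â). Then A = Â. -/
theorem stmt_3 {L : ℕ} (A Ahat P : Matrix (Fin L) (Fin L) ℝ)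
    (hA : ∀ i j, 0 ≤ A i j) (hAhat : ∀ i j, 0 ≤ Ahat i j)
    (hPnn : ∀ i j, 0 ≤ P i j) (hPs : ∀ i, ∑ j, P j i = 1)
    (hEq : A = Ahat * P)
    (hDD : ∀ i j, j ≠ i → Ahat i j < Ahat i i)
    (hTr : Matrix.trace A = Matrix.trace Ahat) :
    A = Ahat := by
  have hdiag : ∀ i, A i i = ∑ k, Ahat i k * P k i := by
    intro i; rw [hEq]; rfl
  have hle : ∀ i, A i i ≤ Ahat i i := by
    intro i
    rw [hdiag i]
    calc ∑ k, Ahat i k * P k i ≤ ∑ k, Ahat i i * P k i := by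
          apply Finset.sum_le_sum
          intro k _
          apply mul_le_mul_of_nonneg_right _ (hPnn k i)
          by_cases h : k = i
          · subst h; exact le_refl _
          · exact (hDD i k h).le
      _ = Ahat i i := by rw [← Finset.mul_sum, hPs i, mul_one]
  have heq : ∀ i, A i i = Ahat i i := by
    have htr' : ∑ i, A i i = ∑ i, Ahat i i := by
      simpa [Matrix.trace, Matrix.diag] using hTr
    have := (Finset.sum_eq_sum_iff_of_le (s := Finset.univ) (fun i _ => hle i)).mp htr'
    exact fun i => this i (Finset.mem_univ i)
  have hP0 : ∀ i k, k ≠ i → P k i = 0 := by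
    intro i k hk
    have hsum : ∑ j, (Ahat i i - Ahat i j) * P j i = 0 := by
      have : ∑ j, (Ahat i i - Ahat i j) * P j i
          = Ahat i i * ∑ j, P j i - ∑ j, Ahat i j * P j i := by
        rw [Finset.mul_sum, ← Finset.sum_sub_distrib]
        congr 1; ext j; ring
      rw [this, hPs i, mul_one, ← hdiag i, heq i, sub_self]
    have hnn : ∀ j ∈ Finset.univ, 0 ≤ (Ahat i i - Ahat i j) * P j i := by
      intro j _
      apply mul_nonneg _ (hPnn j i)
      by_cases h : j = i
      · subst h; simp
      · exact sub_nonneg.mpr (hDD i j h).le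
    have hz := (Finset.sum_eq_zero_iff_of_nonneg hnn).mp hsum k (Finset.mem_univ k)
    rcases mul_eq_zero.mp hz with h | h
    · exact absurd (sub_eq_zero.mp h) (ne_of_gt (hDD i k hk))
    · exact h
  have hPid : P = 1 := by
    ext k i
    by_cases h : k = i
    · subst h
      have := hPs k
      rw [Finset.sum_eq_single k (fun j _ hj => hP0 k j hj) (by simp)] at this
      simp [this]
    · simp [hP0 i k h, Matrix.one_apply_ne h]
  rw [hEq, hPid, mul_one]
end

section
/- Let Â^(1),...,Â^(R) and A^(1),...,A^(R) be L×L matrices with nonnegative entries and let P be an L×L column-stochastic matrix with Â^(r) P = A^(r) for each r. Suppose the average Â* = (1/R)∑_r Â^(r) satisfies Â*_ii > Â*_ij for all j ≠ i, and trace(Â*) = trace(A*) where A* = (1/R)∑_r A^(r). Then P is the identity matrix and Â^(r) = A^(r) for every r ∈ {1,...,R}. -/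
/-!
For a column-stochastic `P`, the column sums of `P` give
`trace B - trace (B * P) = ∑ i, ∑ k, (B i i - B i k) * P k i`.
When each row of `B` is strictly dominated by its diagonal entry every summand is nonnegative, so
equal traces force `P k i = 0` for `k ≠ i`, i.e. `P = 1`. The averages satisfy
`(R⁻¹ • ∑ r, Ahat r) * P = R⁻¹ • ∑ r, A r`, so this applies to them, and then `Ahat r = Ahat r * P = A r`.
-/

open Finset

namespace Matrix

variable {n 𝕜 : Type*} [Fintype n] [DecidableEq n]
  [CommRing 𝕜] [LinearOrder 𝕜] [IsStrictOrderedRing 𝕜] {B P : Matrix n n 𝕜}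

lemma trace_sub_trace_mul_of_mem_colStochastic (hP : P ∈ colStochastic 𝕜 n) :
    trace B - trace (B * P) = ∑ i, ∑ k, (B i i - B i k) * P k i := by
  rw [trace, trace, ← sum_sub_distrib]
  refine sum_congr rfl fun i _ => ?_
  simp only [sub_mul, sum_sub_distrib, ← mul_sum, sum_col_of_mem_colStochastic hP, mul_one,
    diag_apply, mul_apply]

lemma eq_one_of_mem_colStochastic_of_offDiag_eq_zero (hP : P ∈ colStochastic 𝕜 n)
    (hoff : ∀ i j, i ≠ j → P i j = 0) : P = 1 := by
  ext i j
  rcases eq_or_ne i j with rfl | hij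
  · have hcol := sum_col_of_mem_colStochastic hP i
    rwa [sum_eq_single i (fun k _ hk => hoff k i hk) (by simp), ← one_apply_eq i] at hcol
  · rw [hoff i j hij, one_apply_ne hij]

lemma eq_one_of_trace_mul_eq_trace (hP : P ∈ colStochastic 𝕜 n)
    (hdom : ∀ i j, j ≠ i → B i j < B i i) (htr : trace (B * P) = trace B) : P = 1 := by
  have hterm : ∀ i k, 0 ≤ (B i i - B i k) * P k i := fun i k => by
    refine mul_nonneg ?_ (nonneg_of_mem_colStochastic hP)
    rcases eq_or_ne k i with rfl | hki
    · rw [sub_self]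
    · exact (sub_pos.2 (hdom i k hki)).le
  have hsum : ∑ i, ∑ k, (B i i - B i k) * P k i = 0 := by
    rw [← trace_sub_trace_mul_of_mem_colStochastic hP, htr, sub_self]
  refine eq_one_of_mem_colStochastic_of_offDiag_eq_zero hP fun k i hki => ?_
  have hrow := (sum_eq_zero_iff_of_nonneg fun i _ => sum_nonneg fun k _ => hterm i k).1 hsum i
    (mem_univ i)
  have hki' := (sum_eq_zero_iff_of_nonneg fun k _ => hterm i k).1 hrow k (mem_univ k)
  exact (mul_eq_zero.1 hki').resolve_left (sub_pos.2 (hdom i k hki)).ne'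

end Matrix

theorem stmt_5_general {L R : ℕ}
    (Ahat A : Fin R → Matrix (Fin L) (Fin L) ℝ) (P : Matrix (Fin L) (Fin L) ℝ)
    (hPnn : ∀ i j, 0 ≤ P i j) (hPs : ∀ i, ∑ j, P j i = 1)
    (hEq : ∀ r, Ahat r * P = A r)
    (hDD : ∀ i j, j ≠ i →
      ((R : ℝ)⁻¹ • ∑ r, Ahat r) i j < ((R : ℝ)⁻¹ • ∑ r, Ahat r) i i)
    (hTr : Matrix.trace ((R : ℝ)⁻¹ • ∑ r, Ahat r)
         = Matrix.trace ((R : ℝ)⁻¹ • ∑ r, A r)) :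
    P = 1 ∧ ∀ r, Ahat r = A r := by
  have hP : P ∈ Matrix.colStochastic ℝ (Fin L) := Matrix.mem_colStochastic_iff_sum.2 ⟨hPnn, hPs⟩
  have hAvg : ((R : ℝ)⁻¹ • ∑ r, Ahat r) * P = (R : ℝ)⁻¹ • ∑ r, A r := by
    simp only [Matrix.smul_mul, sum_mul, hEq]
  have hP1 : P = 1 := Matrix.eq_one_of_trace_mul_eq_trace hP hDD (by rw [hAvg, hTr])
  exact ⟨hP1, fun r => by rw [← hEq r, hP1, mul_one]⟩

theorem stmt_5 {L R : ℕ} (hR : 0 < R)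
    (Ahat A : Fin R → Matrix (Fin L) (Fin L) ℝ) (P : Matrix (Fin L) (Fin L) ℝ)
    (hAhat : ∀ r i j, 0 ≤ Ahat r i j) (hA : ∀ r i j, 0 ≤ A r i j)
    (hPnn : ∀ i j, 0 ≤ P i j) (hPs : ∀ i, ∑ j, P j i = 1)
    (hEq : ∀ r, Ahat r * P = A r)
    (hDD : ∀ i j, j ≠ i →
      ((R : ℝ)⁻¹ • ∑ r, Ahat r) i j < ((R : ℝ)⁻¹ • ∑ r, Ahat r) i i)
    (hTr : Matrix.trace ((R : ℝ)⁻¹ • ∑ r, Ahat r)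
         = Matrix.trace ((R : ℝ)⁻¹ • ∑ r, A r)) :
    P = 1 ∧ ∀ r, Ahat r = A r :=
  stmt_5_general Ahat A P hPnn hPs hEq hDD hTr
end

section
/- Let Â^(1),...,Â^(R) be L×L matrices with nonnegative entries whose average Â* = (1/R)∑_r Â^(r) is row-wise strictly diagonally dominant (Â*_ii > Â*_ij for j ≠ i), let P be column-stochastic, and set A^(r) = Â^(r) P. Then trace((1/R)∑_r A^(r)) ≤ trace(Â*). -/
open Finset

namespace Matrix

variable {α n : Type*} [Fintype n] [DecidableEq n] [Semiring α] [PartialOrder α] [IsOrderedRing α]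

/-- Each diagonal entry `(B * P) i i = ∑ k, B i k * P k i` is a convex combination of row `i` of
`B`, hence at most its largest entry `B i i`. -/
theorem trace_mul_le_trace_of_mem_colStochastic {B P : Matrix n n α}
    (hB : ∀ i j, B i j ≤ B i i) (hP : P ∈ colStochastic α n) :
    trace (B * P) ≤ trace B := by
  refine sum_le_sum fun i _ => ?_
  calc (B * P) i i = ∑ k, B i k * P k i := rfl
    _ ≤ ∑ k, B i i * P k i :=
      sum_le_sum fun k _ => mul_le_mul_of_nonneg_right (hB i k) (nonneg_of_mem_colStochastic hP)
    _ = B i i := by rw [← mul_sum, sum_col_of_mem_colStochastic hP, mul_one]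

end Matrix

theorem stmt_6_general {L R : ℕ}
    (Ahat : Fin R → Matrix (Fin L) (Fin L) ℝ) (P : Matrix (Fin L) (Fin L) ℝ)
    (hPnn : ∀ i j, 0 ≤ P i j) (hPs : ∀ i, ∑ j, P j i = 1)
    (hDD : ∀ i j, j ≠ i →
      ((R : ℝ)⁻¹ • ∑ r, Ahat r) i j < ((R : ℝ)⁻¹ • ∑ r, Ahat r) i i)
    (A : Fin R → Matrix (Fin L) (Fin L) ℝ) (hA : ∀ r, A r = Ahat r * P) :
    Matrix.trace ((R : ℝ)⁻¹ • ∑ r, A r)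
      ≤ Matrix.trace ((R : ℝ)⁻¹ • ∑ r, Ahat r) := by
  have hP : P ∈ Matrix.colStochastic ℝ (Fin L) := Matrix.mem_colStochastic_iff_sum.2 ⟨hPnn, hPs⟩
  have hmean : (R : ℝ)⁻¹ • ∑ r, A r = ((R : ℝ)⁻¹ • ∑ r, Ahat r) * P := by
    simp only [hA, Matrix.smul_mul, sum_mul]
  rw [hmean]
  refine Matrix.trace_mul_le_trace_of_mem_colStochastic (fun i j => ?_) hP
  rcases eq_or_ne j i with rfl | hji
  exacts [le_rfl, (hDD i j hji).le]

theorem stmt_6 {L R : ℕ} (hR : 0 < R)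
    (Ahat : Fin R → Matrix (Fin L) (Fin L) ℝ) (P : Matrix (Fin L) (Fin L) ℝ)
    (hAhat : ∀ r i j, 0 ≤ Ahat r i j)
    (hPnn : ∀ i j, 0 ≤ P i j) (hPs : ∀ i, ∑ j, P j i = 1)
    (hDD : ∀ i j, j ≠ i →
      ((R : ℝ)⁻¹ • ∑ r, Ahat r) i j < ((R : ℝ)⁻¹ • ∑ r, Ahat r) i i)
    (A : Fin R → Matrix (Fin L) (Fin L) ℝ) (hA : ∀ r, A r = Ahat r * P) :
    Matrix.trace ((R : ℝ)⁻¹ • ∑ r, A r)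
      ≤ Matrix.trace ((R : ℝ)⁻¹ • ∑ r, Ahat r) :=
  stmt_6_general Ahat P hPnn hPs hDD A hA
end

section
/- Let Â be an L×L matrix with nonnegative entries that is row-wise strictly diagonally dominant (Â_ii > Â_ij for all j ≠ i), and let P be column-stochastic. If trace(ÂP) ≥ trace(Â), then P is the identity matrix. -/
theorem stmt_11 {L : ℕ} (Ahat P : Matrix (Fin L) (Fin L) ℝ)
    (hAhat : ∀ i j, 0 ≤ Ahat i j)
    (hDD : ∀ i j, j ≠ i → Ahat i j < Ahat i i)
    (hPnn : ∀ i j, 0 ≤ P i j) (hPs : ∀ i, ∑ j, P j i = 1)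
    (hTr : Matrix.trace Ahat ≤ Matrix.trace (Ahat * P)) :
    P = 1 := by
  -- diagonal entries of Ahat*P are ≤ diagonal entries of Ahat
  have key : ∀ i : Fin L, ∑ k, Ahat i k * P k i ≤ Ahat i i := by
    intro i
    calc ∑ k, Ahat i k * P k i ≤ ∑ k, Ahat i i * P k i := by
          apply Finset.sum_le_sum
          intro k _
          rcases eq_or_ne k i with rfl | h
          · exact le_refl _
          · exact mul_le_mul_of_nonneg_right (le_of_lt (hDD i k h)) (hPnn k i)
      _ = Ahat i i * ∑ k, P k i := by rw [Finset.mul_sum]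
      _ = Ahat i i := by rw [hPs i, mul_one]
  have htr : Matrix.trace (Ahat * P) = ∑ i, ∑ k, Ahat i k * P k i := by
    simp [Matrix.trace, Matrix.mul_apply, Matrix.diag]
  have htrA : Matrix.trace Ahat = ∑ i, Ahat i i := by
    simp [Matrix.trace, Matrix.diag]
  have hsum_le : ∑ i, ∑ k, Ahat i k * P k i ≤ ∑ i, Ahat i i :=
    Finset.sum_le_sum (fun i _ => key i)
  have heq : ∑ i, ∑ k, Ahat i k * P k i = ∑ i, Ahat i i := by
    have := hTr
    rw [htr, htrA] at this
    linarith
  -- termwise equality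
  have hterm : ∀ i : Fin L, ∑ k, Ahat i k * P k i = Ahat i i := by
    intro i
    by_contra h
    have hlt : ∑ k, Ahat i k * P k i < Ahat i i := lt_of_le_of_ne (key i) h
    have : ∑ i, ∑ k, Ahat i k * P k i < ∑ i, Ahat i i := by
      apply Finset.sum_lt_sum (fun j _ => key j) ⟨i, Finset.mem_univ i, hlt⟩
    linarith [heq]
  -- off-diagonal entries of P vanish
  have hoff : ∀ i k : Fin L, k ≠ i → P k i = 0 := by
    intro i k hk
    have h0 : ∑ k, (Ahat i i - Ahat i k) * P k i = 0 := by
      have : ∑ k, (Ahat i i - Ahat i k) * P k i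
          = Ahat i i * ∑ k, P k i - ∑ k, Ahat i k * P k i := by
        rw [Finset.mul_sum, ← Finset.sum_sub_distrib]
        congr 1; ext k; ring
      rw [this, hPs i, mul_one, hterm i, sub_self]
    have hnn : ∀ k ∈ Finset.univ, 0 ≤ (Ahat i i - Ahat i k) * P k i := by
      intro k _
      rcases eq_or_ne k i with rfl | h
      · simp
      · exact mul_nonneg (by linarith [hDD i k h]) (hPnn k i)
    have hzero := (Finset.sum_eq_zero_iff_of_nonneg hnn).mp h0 k (Finset.mem_univ k)
    have hpos : 0 < Ahat i i - Ahat i k := by linarith [hDD i k hk]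
    have := mul_eq_zero.mp hzero
    rcases this with h1 | h2
    · linarith
    · exact h2
  -- diagonal entries equal 1
  have hdiag : ∀ i : Fin L, P i i = 1 := by
    intro i
    have := hPs i
    rw [← this]
    rw [Finset.sum_eq_single i]
    · intro b _ hb; exact hoff i b hb
    · intro h; exact absurd (Finset.mem_univ i) h
  ext i j
  rcases eq_or_ne i j with rfl | h
  · simp [hdiag i]
  · simp [Matrix.one_apply_ne h, hoff j i h]
end

section
/- Among all pairs (Â, P) with Â an L×L nonnegative row-wise strictly diagonally dominant matrix and P column-stochastic satisfying ÂP = A for a fixed nonnegative row-wise strictly diagonally dominant matrix A, the pair (A, I) attains the minimum possible value of trace(Â), and any minimizer satisfies Â = A and P = I. -/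
/-!
Column `i` of a column-stochastic `P` is a probability vector, so `(B * P) i i` is a convex
combination of the row `B i`, whose largest entry is `B i i`; summing over `i` gives
`trace (B * P) ≤ trace B`. If equality holds, every diagonal entry is attained, and strict
diagonal dominance forces all the weight of column `i` onto `k = i`, i.e. `P = 1`.
-/

namespace Matrix

variable {n R : Type*} {B P : Matrix n n R}

lemma sum_mul_diag_apply_of_colSum [Fintype n] [Semiring R] (hcol : ∀ i, ∑ j, P j i = 1)
    (i : n) : ∑ k, B i i * P k i = B i i := by
  rw [← Finset.mul_sum, hcol i, mul_one]

lemma eq_one_of_offDiag_eq_zero [Fintype n] [DecidableEq n] [Semiring R]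
    (hcol : ∀ i, ∑ j, P j i = 1) (hoff : ∀ i k, k ≠ i → P k i = 0) : P = 1 := by
  ext k i
  rcases eq_or_ne k i with rfl | hk
  · rw [one_apply_eq, ← hcol k, Finset.sum_eq_single k (fun j _ hj => hoff k j hj)
      (fun h => (h (Finset.mem_univ k)).elim)]
  · rw [one_apply_ne hk, hoff i k hk]

section OrderedSemiring

variable [Semiring R] [PartialOrder R] [IsOrderedRing R]

lemma mul_apply_le_mul_diag_apply (hB : ∀ i k, k ≠ i → B i k ≤ B i i)
    (hP : ∀ i j, 0 ≤ P i j) (i k : n) : B i k * P k i ≤ B i i * P k i := by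
  rcases eq_or_ne k i with rfl | hk
  · rfl
  · exact mul_le_mul_of_nonneg_right (hB i k hk) (hP k i)

variable [Fintype n]

lemma mul_apply_diag_le (hB : ∀ i k, k ≠ i → B i k ≤ B i i) (hP : ∀ i j, 0 ≤ P i j)
    (hcol : ∀ i, ∑ j, P j i = 1) (i : n) : (B * P) i i ≤ B i i := by
  calc (B * P) i i = ∑ k, B i k * P k i := mul_apply
    _ ≤ ∑ k, B i i * P k i :=
      Finset.sum_le_sum fun k _ => mul_apply_le_mul_diag_apply hB hP i k
    _ = B i i := sum_mul_diag_apply_of_colSum hcol i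

lemma trace_mul_le (hB : ∀ i k, k ≠ i → B i k ≤ B i i) (hP : ∀ i j, 0 ≤ P i j)
    (hcol : ∀ i, ∑ j, P j i = 1) : trace (B * P) ≤ trace B :=
  Finset.sum_le_sum fun i _ => mul_apply_diag_le hB hP hcol i

end OrderedSemiring

variable [Fintype n] [Ring R] [LinearOrder R] [IsStrictOrderedRing R]

lemma apply_eq_zero_of_mul_apply_diag_eq (hB : ∀ i k, k ≠ i → B i k < B i i)
    (hP : ∀ i j, 0 ≤ P i j) (hcol : ∀ i, ∑ j, P j i = 1) {i : n}
    (hi : (B * P) i i = B i i) {k : n} (hk : k ≠ i) : P k i = 0 := by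
  have hsum : ∑ k, B i k * P k i = ∑ k, B i i * P k i := by
    rw [← mul_apply, hi, sum_mul_diag_apply_of_colSum hcol i]
  have hterm : B i k * P k i = B i i * P k i :=
    (Finset.sum_eq_sum_iff_of_le fun k _ =>
      mul_apply_le_mul_diag_apply (fun i k hk => (hB i k hk).le) hP i k).mp hsum k
      (Finset.mem_univ k)
  have hgap : (B i i - B i k) * P k i = 0 := by rw [sub_mul, hterm, sub_self]
  exact (mul_eq_zero.mp hgap).resolve_left (sub_pos.mpr (hB i k hk)).ne'

lemma eq_one_of_trace_mul_eq [DecidableEq n] (hB : ∀ i k, k ≠ i → B i k < B i i)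
    (hP : ∀ i j, 0 ≤ P i j) (hcol : ∀ i, ∑ j, P j i = 1) (htr : trace (B * P) = trace B) :
    P = 1 := by
  have hdiag : ∀ i, (B * P) i i = B i i := fun i =>
    (Finset.sum_eq_sum_iff_of_le fun i _ =>
      mul_apply_diag_le (fun i k hk => (hB i k hk).le) hP hcol i).mp htr i
      (Finset.mem_univ i)
  exact eq_one_of_offDiag_eq_zero hcol fun i k hk =>
    apply_eq_zero_of_mul_apply_diag_eq hB hP hcol (hdiag i) hk

end Matrix

theorem stmt_13_general {L : ℕ} (A : Matrix (Fin L) (Fin L) ℝ) :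
    (A * (1 : Matrix (Fin L) (Fin L) ℝ) = A) ∧
    (∀ Ahat P : Matrix (Fin L) (Fin L) ℝ,
      (∀ i j, 0 ≤ Ahat i j) → (∀ i j, j ≠ i → Ahat i j < Ahat i i) →
      (∀ i j, 0 ≤ P i j) → (∀ i, ∑ j, P j i = 1) →
      Ahat * P = A →
      Matrix.trace A ≤ Matrix.trace Ahat ∧
        (Matrix.trace Ahat = Matrix.trace A → Ahat = A ∧ P = 1)) := by
  refine ⟨Matrix.mul_one A, fun Ahat P _ hdd hP hcol hfac => ?_⟩
  subst hfac
  refine ⟨Matrix.trace_mul_le (fun i k hk => (hdd i k hk).le) hP hcol, fun htr => ?_⟩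
  obtain rfl : P = 1 := Matrix.eq_one_of_trace_mul_eq hdd hP hcol htr.symm
  exact ⟨(Matrix.mul_one Ahat).symm, rfl⟩

theorem stmt_13 {L : ℕ} (A : Matrix (Fin L) (Fin L) ℝ)
    (hAnn : ∀ i j, 0 ≤ A i j)
    (hADD : ∀ i j, j ≠ i → A i j < A i i) :
    (A * (1 : Matrix (Fin L) (Fin L) ℝ) = A) ∧
    (∀ Ahat P : Matrix (Fin L) (Fin L) ℝ,
      (∀ i j, 0 ≤ Ahat i j) → (∀ i j, j ≠ i → Ahat i j < Ahat i i) →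
      (∀ i j, 0 ≤ P i j) → (∀ i, ∑ j, P j i = 1) →
      Ahat * P = A →
      Matrix.trace A ≤ Matrix.trace Ahat ∧
        (Matrix.trace Ahat = Matrix.trace A → Ahat = A ∧ P = 1)) :=
  stmt_13_general A
end

section
/- Let Â^(1),...,Â^(R) be L×L nonnegative matrices whose average is row-wise strictly diagonally dominant, and let P, Q be column-stochastic L×L matrices. If Â^(r)P = Â^(r)Q for all r and trace of the average of Â^(r)P equals trace of the average of the Â^(r), then P = Q = I. -/
/-!
Let `A` be the average of the `Â⁽ʳ⁾`; by linearity `A P = A Q`, so both `A P` and `A Q` have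
trace `tr A`. For column-stochastic `P`, `tr A = ∑ᵢⱼ Aᵢᵢ Pⱼᵢ`, which dominates
`tr (A P) = ∑ᵢⱼ Aᵢⱼ Pⱼᵢ` term by term. Equality together with strict diagonal dominance forces
`Pⱼᵢ = 0` off the diagonal, and the column sums then give `P = 1`; likewise `Q = 1`.
-/

open Finset

namespace Matrix

variable {n R : Type*} [Fintype n] [DecidableEq n] [Ring R] [PartialOrder R]
  [IsStrictOrderedRing R]

theorem eq_one_of_mem_colStochastic_of_apply_eq_zero {P : Matrix n n R}
    (hP : P ∈ colStochastic R n) (hoff : ∀ i j, j ≠ i → P j i = 0) : P = 1 := by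
  ext j i
  rcases eq_or_ne j i with rfl | hji
  · rw [one_apply_eq, ← sum_col_of_mem_colStochastic hP j,
      sum_eq_single j (fun k _ hkj => hoff j k hkj) (by simp)]
  · rw [one_apply_ne hji, hoff i j hji]

theorem trace_eq_sum_diag_mul_of_mem_colStochastic (A : Matrix n n R) {P : Matrix n n R}
    (hP : P ∈ colStochastic R n) : A.trace = ∑ i, ∑ j, A i i * P j i := by
  simp [trace, ← mul_sum, sum_col_of_mem_colStochastic hP]

theorem eq_one_of_trace_mul_eq_trace_s17 {A P : Matrix n n R}
    (hA : ∀ i j, j ≠ i → A i j < A i i) (hP : P ∈ colStochastic R n)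
    (h : (A * P).trace = A.trace) : P = 1 := by
  have hle : ∀ i j, A i j * P j i ≤ A i i * P j i := fun i j => by
    rcases eq_or_ne j i with rfl | hji
    · rfl
    · exact mul_le_mul_of_nonneg_right (hA i j hji).le (nonneg_of_mem_colStochastic hP)
  have htrace : ∑ i, ∑ j, A i j * P j i = ∑ i, ∑ j, A i i * P j i := by
    simpa [trace, mul_apply, ← trace_eq_sum_diag_mul_of_mem_colStochastic A hP] using h
  have hrow := (sum_eq_sum_iff_of_le fun i _ => sum_le_sum fun j _ => hle i j).1 htrace
  have hterm : ∀ i j, A i j * P j i = A i i * P j i := fun i j =>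
    (sum_eq_sum_iff_of_le fun j _ => hle i j).1 (hrow i (mem_univ i)) j (mem_univ j)
  refine eq_one_of_mem_colStochastic_of_apply_eq_zero hP fun i j hji => ?_
  by_contra hne
  have hpos := (nonneg_of_mem_colStochastic hP).lt_of_ne' hne
  exact (mul_lt_mul_of_pos_right (hA i j hji) hpos).ne (hterm i j)

end Matrix

open Matrix in
theorem stmt_17_general {L R : ℕ}
    (Ahat : Fin R → Matrix (Fin L) (Fin L) ℝ) (P Q : Matrix (Fin L) (Fin L) ℝ)
    (hDD : ∀ i j, j ≠ i →
      ((R : ℝ)⁻¹ • ∑ r, Ahat r) i j < ((R : ℝ)⁻¹ • ∑ r, Ahat r) i i)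
    (hPnn : ∀ i j, 0 ≤ P i j) (hPs : ∀ i, ∑ j, P j i = 1)
    (hQnn : ∀ i j, 0 ≤ Q i j) (hQs : ∀ i, ∑ j, Q j i = 1)
    (hPQ : ∀ r, Ahat r * P = Ahat r * Q)
    (hTr : Matrix.trace ((R : ℝ)⁻¹ • ∑ r, (Ahat r * P))
         = Matrix.trace ((R : ℝ)⁻¹ • ∑ r, Ahat r)) :
    P = 1 ∧ Q = 1 := by
  set A := (R : ℝ)⁻¹ • ∑ r, Ahat r
  have hmul (M : Matrix (Fin L) (Fin L) ℝ) : A * M = (R : ℝ)⁻¹ • ∑ r, Ahat r * M := by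
    rw [smul_mul, sum_mul]
  have hTrP : (A * P).trace = A.trace := by rwa [hmul]
  have hTrQ : (A * Q).trace = A.trace := by simpa only [hmul, hPQ] using hTrP
  exact ⟨eq_one_of_trace_mul_eq_trace_s17 hDD (mem_colStochastic_iff_sum.2 ⟨hPnn, hPs⟩) hTrP,
    eq_one_of_trace_mul_eq_trace_s17 hDD (mem_colStochastic_iff_sum.2 ⟨hQnn, hQs⟩) hTrQ⟩

theorem stmt_17 {L R : ℕ} (hR : 0 < R)
    (Ahat : Fin R → Matrix (Fin L) (Fin L) ℝ) (P Q : Matrix (Fin L) (Fin L) ℝ)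
    (hAhat : ∀ r i j, 0 ≤ Ahat r i j)
    (hDD : ∀ i j, j ≠ i →
      ((R : ℝ)⁻¹ • ∑ r, Ahat r) i j < ((R : ℝ)⁻¹ • ∑ r, Ahat r) i i)
    (hPnn : ∀ i j, 0 ≤ P i j) (hPs : ∀ i, ∑ j, P j i = 1)
    (hQnn : ∀ i j, 0 ≤ Q i j) (hQs : ∀ i, ∑ j, Q j i = 1)
    (hPQ : ∀ r, Ahat r * P = Ahat r * Q)
    (hTr : Matrix.trace ((R : ℝ)⁻¹ • ∑ r, (Ahat r * P))
         = Matrix.trace ((R : ℝ)⁻¹ • ∑ r, Ahat r)) :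
    P = 1 ∧ Q = 1 :=
  stmt_17_general Ahat P Q hDD hPnn hPs hQnn hQs hPQ hTr
end
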